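/- arXiv:2411.15452 — 4 statements merged into one kernel-verified Lean document; each statement's English description precedes it below -/
import Mathlib

section
/- Let C ⊆ D ⊆ ℝⁿ with C compact, D closed, and f : D → ℝᵐ continuous. Then there exists a class-K∞ function α such that |f(x) − f(y)| ≤ α(|x − y|) for all x ∈ C and y ∈ D. -/
open Filter

/-- A class-K function: continuous, strictly increasing on `[0,∞)`, vanishing at `0`. -/
def ClassK (α : ℝ → ℝ) : Prop :=
  ContinuousOn α (Set.Ici 0) ∧ StrictMonoOn α (Set.Ici 0) ∧ α 0 = 0

/-- A class-K∞ function: class-K and unbounded. -/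
def ClassKInf (α : ℝ → ℝ) : Prop :=
  ClassK α ∧ ∀ M : ℝ, ∃ s ≥ (0:ℝ), α s > M

/-- A joint K-function (class K²): continuous on the nonnegative quadrant, and
class-K in each argument when the other is fixed positive. -/
def ClassK2 (γ : ℝ → ℝ → ℝ) : Prop :=
  ContinuousOn (fun p : ℝ × ℝ => γ p.1 p.2) (Set.Ici 0 ×ˢ Set.Ici 0) ∧
  (∀ s > (0:ℝ), ClassK (γ s)) ∧
  (∀ s > (0:ℝ), ClassK (fun t => γ t s))

/-- Any monotone function vanishing at `0` that is right-continuous at `0`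
is dominated on `[0,∞)` by a class-K∞ function. -/
lemma exists_classKInf_dominating (ω : ℝ → ℝ) (hmono : Monotone ω) (h0 : ω 0 = 0)
    (hrc : ∀ ε > (0:ℝ), ∃ δ > (0:ℝ), ∀ r, 0 ≤ r → r ≤ δ → ω r ≤ ε) :
    ∃ α : ℝ → ℝ, ClassKInf α ∧ ∀ r, 0 ≤ r → ω r ≤ α r := by
  have hnn : ∀ r, 0 ≤ r → 0 ≤ ω r := fun r hr => h0 ▸ hmono hr
  set g : ℝ → ℝ := fun r => ∫ t in (1:ℝ)..2, ω (r * t) with hg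
  set α : ℝ → ℝ := fun r => r + g r with hα
  have hint : ∀ r, 0 ≤ r → ∀ a b : ℝ,
      IntervalIntegrable (fun t => ω (r * t)) MeasureTheory.volume a b := by
    intro r hr a b
    have : Monotone fun t => ω (r * t) :=
      fun t t' h => hmono (mul_le_mul_of_nonneg_left h hr)
    exact this.intervalIntegrable
  have hωint : ∀ a b : ℝ, IntervalIntegrable ω MeasureTheory.volume a b :=
    fun a b => hmono.intervalIntegrable
  -- lower bound : ω r ≤ g r
  have hglb : ∀ r, 0 ≤ r → ω r ≤ g r := by
    intro r hr
    have h1 : (∫ _t in (1:ℝ)..2, ω r) ≤ ∫ t in (1:ℝ)..2, ω (r * t) := by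
      apply intervalIntegral.integral_mono_on (by norm_num)
        intervalIntegrable_const (hint r hr 1 2)
      intro t ht
      exact hmono (by nlinarith [ht.1])
    have hconst : (∫ _t in (1:ℝ)..2, ω r) = ω r := by
      rw [intervalIntegral.integral_const]; norm_num
    exact hconst ▸ h1
  -- upper bound : g r ≤ ω (2r)
  have hgub : ∀ r, 0 ≤ r → g r ≤ ω (2 * r) := by
    intro r hr
    have h1 : (∫ t in (1:ℝ)..2, ω (r * t)) ≤ ∫ _t in (1:ℝ)..2, ω (2 * r) := by
      apply intervalIntegral.integral_mono_on (by norm_num)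
        (hint r hr 1 2) intervalIntegrable_const
      intro t ht
      exact hmono (by nlinarith [ht.2])
    have hconst : (∫ _t in (1:ℝ)..2, ω (2 * r)) = ω (2 * r) := by
      rw [intervalIntegral.integral_const]; norm_num
    exact hconst ▸ h1
  have hgnn : ∀ r, 0 ≤ r → 0 ≤ g r := fun r hr => (hnn r hr).trans (hglb r hr)
  have hg0 : g 0 = 0 := by simp [hg, h0]
  have hgmono : ∀ a, 0 ≤ a → ∀ b, a ≤ b → g a ≤ g b := by
    intro a ha b hab
    apply intervalIntegral.integral_mono_on (by norm_num)
      (hint a ha 1 2) (hint b (ha.trans hab) 1 2)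
    intro t ht
    exact hmono (mul_le_mul_of_nonneg_right hab (by linarith [ht.1]))
  -- primitive
  set F : ℝ → ℝ := fun x => ∫ t in (0:ℝ)..x, ω t with hF
  have hFcont : Continuous F := intervalIntegral.continuous_primitive hωint 0
  have hkey : ∀ r : ℝ, 0 < r → g r = r⁻¹ * (F (2 * r) - F r) := by
    intro r hr
    have h1 : (∫ t in (1:ℝ)..2, ω (r * t))
        = r⁻¹ • ∫ s in (r * 1)..(r * 2), ω s :=
      intervalIntegral.integral_comp_mul_left ω hr.ne'
    have h2 : F (2 * r) - F r = ∫ s in r..(2 * r), ω s :=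
      intervalIntegral.integral_interval_sub_left (hωint 0 (2 * r)) (hωint 0 r)
    show (∫ t in (1:ℝ)..2, ω (r * t)) = r⁻¹ * (F (2 * r) - F r)
    rw [h1, h2, smul_eq_mul, mul_one, mul_comm r 2]
  refine ⟨α, ⟨⟨?_, ?_, ?_⟩, ?_⟩, ?_⟩
  · -- continuity on [0,∞)
    intro r₀ hr₀
    rcases eq_or_lt_of_le (Set.mem_Ici.mp hr₀ : (0:ℝ) ≤ r₀) with h | h
    · -- continuity at 0 within Ici 0
      subst h
      have hα0 : α 0 = 0 := by simp [hα, hg0]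
      rw [ContinuousWithinAt, hα0, Metric.tendsto_nhdsWithin_nhds]
      intro ε hε
      obtain ⟨δ, hδ, hδ'⟩ := hrc (ε / 4) (by linarith)
      refine ⟨min (ε / 4) (δ / 2), by positivity, ?_⟩
      intro r hr hdist
      have hr0 : 0 ≤ r := hr
      rw [Real.dist_eq, sub_zero] at hdist
      rw [abs_lt] at hdist
      have hrε : r < ε / 4 := lt_of_lt_of_le hdist.2 (min_le_left _ _)
      have hrδ : r < δ / 2 := lt_of_lt_of_le hdist.2 (min_le_right _ _)
      have h2r : ω (2 * r) ≤ ε / 4 := hδ' (2 * r) (by linarith) (by linarith)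
      have hαr : α r ≤ r + ω (2 * r) := by
        simp only [hα]
        linarith [hgub r hr0]
      have hαnn : 0 ≤ α r := by
        simp only [hα]
        linarith [hgnn r hr0]
      rw [Real.dist_eq, sub_zero, abs_of_nonneg hαnn]
      linarith
    · -- continuity at r₀ > 0
      apply ContinuousAt.continuousWithinAt
      have hcont : ContinuousAt (fun r => r + r⁻¹ * (F (2 * r) - F r)) r₀ := by
        have h1 : Continuous fun r : ℝ => F (2 * r) := hFcont.comp (by continuity)
        exact continuousAt_id.add ((continuousAt_inv₀ h.ne').mul
          (h1.continuousAt.sub hFcont.continuousAt))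
      apply hcont.congr
      filter_upwards [isOpen_Ioi.mem_nhds h] with r hr
      simp only [hα]
      rw [hkey r hr]
  · -- strict monotone
    intro a ha b hb hab
    have := hgmono a ha b hab.le
    simp only [hα]
    linarith
  · -- α 0 = 0
    simp [hα, hg0]
  · -- unbounded
    intro M
    refine ⟨max M 0 + 1, by positivity, ?_⟩
    have h1 : 0 ≤ max M 0 + 1 := by positivity
    have := hgnn _ h1
    simp only [hα]
    have : M ≤ max M 0 := le_max_left _ _
    linarith [hgnn _ h1]
  · -- domination
    intro r hr
    simp only [hα]
    linarith [hglb r hr]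

theorem stmt6 {n m : ℕ} (C D : Set (EuclideanSpace ℝ (Fin n)))
    (f : EuclideanSpace ℝ (Fin n) → EuclideanSpace ℝ (Fin m))
    (hCD : C ⊆ D) (hC : IsCompact C) (hD : IsClosed D)
    (hf : ContinuousOn f D) :
    ∃ α : ℝ → ℝ, ClassKInf α ∧
      ∀ x ∈ C, ∀ y ∈ D, ‖f x - f y‖ ≤ α ‖x - y‖ := by
  by_cases hne : C.Nonempty
  swap
  · -- C empty : identity works
    refine ⟨id, ⟨⟨continuous_id.continuousOn, fun a _ b _ h => h, rfl⟩, ?_⟩, ?_⟩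
    · intro M
      exact ⟨max M 0 + 1, by positivity, by simp; linarith [le_max_left M 0]⟩
    · intro x hx
      exact absurd ⟨x, hx⟩ hne
  obtain ⟨x₀, hx₀⟩ := hne
  set S : ℝ → Set ℝ :=
    fun r => {d | ∃ x ∈ C, ∃ y ∈ D, dist x y ≤ r ∧ d = ‖f x - f y‖} with hS
  set ω : ℝ → ℝ := fun r => sSup (S r) with hω
  have hbdd : ∀ r, BddAbove (S r) := by
    intro r
    set r' := max r 0 with hr'
    have hK : IsCompact (D ∩ Metric.cthickening r' C) := (hC.cthickening).inter_left hD
    have himg : IsCompact (f '' (D ∩ Metric.cthickening r' C)) :=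
      hK.image_of_continuousOn (hf.mono Set.inter_subset_left)
    obtain ⟨M, hM⟩ := isBounded_iff_forall_norm_le.mp himg.isBounded
    refine ⟨2 * M, ?_⟩
    rintro d ⟨x, hx, y, hy, hxy, rfl⟩
    have hxK : x ∈ D ∩ Metric.cthickening r' C :=
      ⟨hCD hx, Metric.self_subset_cthickening C hx⟩
    have hyK : y ∈ D ∩ Metric.cthickening r' C :=
      ⟨hy, Metric.mem_cthickening_of_dist_le y x r' C hx
        (by rw [dist_comm]; exact hxy.trans (le_max_left r 0))⟩
    calc ‖f x - f y‖ ≤ ‖f x‖ + ‖f y‖ := norm_sub_le _ _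
      _ ≤ M + M := add_le_add (hM _ ⟨x, hxK, rfl⟩) (hM _ ⟨y, hyK, rfl⟩)
      _ = 2 * M := by ring
  have hnn : ∀ r, 0 ≤ ω r := by
    intro r
    rcases Set.eq_empty_or_nonempty (S r) with h | ⟨d, hd⟩
    · simp [hω, h, Real.sSup_empty]
    · have hdnn : 0 ≤ d := by
        obtain ⟨x, _, y, _, _, rfl⟩ := hd
        exact norm_nonneg _
      exact hdnn.trans (le_csSup (hbdd r) hd)
  have hmono : Monotone ω := by
    intro r r' hrr'
    have hsub : S r ⊆ S r' := by
      rintro d ⟨x, hx, y, hy, hxy, rfl⟩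
      exact ⟨x, hx, y, hy, hxy.trans hrr', rfl⟩
    rcases Set.eq_empty_or_nonempty (S r) with h | h
    · have : ω r = 0 := by simp [hω, h, Real.sSup_empty]
      rw [this]; exact hnn r'
    · exact csSup_le_csSup (hbdd r') h hsub
  have h0 : ω 0 = 0 := by
    refine le_antisymm (Real.sSup_le ?_ le_rfl) (hnn 0)
    rintro d ⟨x, hx, y, hy, hxy, rfl⟩
    have : x = y := by
      have := dist_nonneg (x := x) (y := y)
      exact dist_le_zero.mp hxy
    subst this
    simp
  have hrc : ∀ ε > (0:ℝ), ∃ δ > (0:ℝ), ∀ r, 0 ≤ r → r ≤ δ → ω r ≤ ε := by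
    intro ε hε
    have hK : IsCompact (D ∩ Metric.cthickening 1 C) := (hC.cthickening).inter_left hD
    have huc := hK.uniformContinuousOn_of_continuous (hf.mono Set.inter_subset_left)
    rw [Metric.uniformContinuousOn_iff] at huc
    obtain ⟨δ, hδ, hδ'⟩ := huc ε hε
    refine ⟨min (δ / 2) 1, by positivity, ?_⟩
    intro r hr0 hrδ
    apply Real.sSup_le _ hε.le
    rintro d ⟨x, hx, y, hy, hxy, rfl⟩
    have hxK : x ∈ D ∩ Metric.cthickening 1 C :=
      ⟨hCD hx, Metric.self_subset_cthickening C hx⟩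
    have hyK : y ∈ D ∩ Metric.cthickening 1 C :=
      ⟨hy, Metric.mem_cthickening_of_dist_le y x 1 C hx
        (by rw [dist_comm]; exact hxy.trans (hrδ.trans (min_le_right _ _)))⟩
    have hlt : dist x y < δ := by
      have h1 : dist x y ≤ δ / 2 := hxy.trans (hrδ.trans (min_le_left _ _))
      linarith
    have := hδ' x hxK y hyK hlt
    rw [dist_eq_norm] at this
    exact this.le
  obtain ⟨α, hαK, hdom⟩ := exists_classKInf_dominating ω hmono h0 hrc
  refine ⟨α, hαK, ?_⟩
  intro x hx y hy
  have h1 : ‖f x - f y‖ ≤ ω ‖x - y‖ :=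
    le_csSup (hbdd _) ⟨x, hx, y, hy, by rw [dist_eq_norm], rfl⟩
  exact h1.trans (hdom _ (norm_nonneg _))
end

section
/- Let S ⊆ ℝⁿ, U ⊆ ℝᵐ, Θ ⊆ ℝᵖ be compact sets with 0 ∈ S, 0 ∈ U, 0 ∈ Θ, and f : ℝⁿ × ℝᵐ × ℝᵖ → ℝⁿ continuous with f(0,0,θ) = 0 for all θ. Then there exists a joint K-function γ_f such that |f(x,u,θ) − f(x,u,0)| ≤ γ_f(|(x,u)|, |θ|) for all x ∈ S, u ∈ U, θ ∈ Θ. -/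
open Filter

open Set intervalIntegral in
lemma classK_majorant {E : Type*} (K : Set E) (g ρ : E → ℝ) (C : ℝ)
    (hbdd : ∀ x ∈ K, g x ≤ C)
    (hρ : ∀ x ∈ K, 0 ≤ ρ x)
    (hzero : ∀ x ∈ K, ρ x ≤ 0 → g x ≤ 0)
    (hcont : ∀ ε > 0, ∃ δ > 0, ∀ x ∈ K, ρ x ≤ δ → g x ≤ ε) :
    ∃ α : ℝ → ℝ, ClassK α ∧ (∀ t ≥ (0:ℝ), t ≤ α t) ∧ ∀ x ∈ K, g x ≤ α (ρ x) := by
  classical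
  set M : ℝ → ℝ := fun t => sSup (insert 0 (g '' {x | x ∈ K ∧ ρ x ≤ t})) with hM
  have hset_bdd : ∀ t, BddAbove (insert 0 (g '' {x | x ∈ K ∧ ρ x ≤ t})) := by
    intro t
    refine ⟨max C 0, ?_⟩
    rintro y (rfl | ⟨x, hx, rfl⟩)
    · exact le_max_right _ _
    · exact le_trans (hbdd x hx.1) (le_max_left _ _)
  have hMmono : Monotone M := by
    intro t₁ t₂ h
    refine csSup_le_csSup (hset_bdd t₂) ⟨0, mem_insert _ _⟩ ?_
    exact insert_subset_insert (Set.image_mono (fun x hx => ⟨hx.1, hx.2.trans h⟩))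
  have hM0 : ∀ t, 0 ≤ M t := fun t => le_csSup (hset_bdd t) (mem_insert _ _)
  have hMC : ∀ t, M t ≤ max C 0 := by
    intro t
    refine csSup_le ⟨0, mem_insert _ _⟩ ?_
    rintro y (rfl | ⟨x, hx, rfl⟩)
    · exact le_max_right _ _
    · exact le_trans (hbdd x hx.1) (le_max_left _ _)
  have hMle : ∀ x ∈ K, g x ≤ M (ρ x) := by
    intro x hx
    exact le_csSup (hset_bdd _) (mem_insert_of_mem _ ⟨x, ⟨hx, le_rfl⟩, rfl⟩)
  have hMzero : ∀ t ≤ (0:ℝ), M t = 0 := by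
    intro t ht
    refine le_antisymm ?_ (hM0 t)
    refine csSup_le ⟨0, mem_insert _ _⟩ ?_
    rintro y (rfl | ⟨x, hx, rfl⟩)
    · exact le_rfl
    · exact hzero x hx.1 (hx.2.trans ht)
  have hMcont0 : ∀ ε > (0:ℝ), ∃ δ > (0:ℝ), ∀ t ≤ δ, M t ≤ ε := by
    intro ε hε
    obtain ⟨δ, hδ, h⟩ := hcont ε hε
    refine ⟨δ, hδ, fun t ht => ?_⟩
    refine csSup_le ⟨0, mem_insert _ _⟩ ?_
    rintro y (rfl | ⟨x, hx, rfl⟩)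
    · exact hε.le
    · exact h x hx.1 (hx.2.trans ht)
  have hMint : ∀ a b : ℝ, IntervalIntegrable M MeasureTheory.volume a b :=
    fun a b => hMmono.intervalIntegrable
  set G : ℝ → ℝ := fun t => ∫ u in (0:ℝ)..t, M u with hG
  have hGcont : Continuous G := intervalIntegral.continuous_primitive hMint 0
  have hGdiff : ∀ t : ℝ, G (2*t) - G t = ∫ u in t..(2*t), M u := by
    intro t
    exact integral_interval_sub_left (hMint 0 (2*t)) (hMint 0 t)
  set F : ℝ → ℝ := fun t => (G (2*t) - G t) / t with hF
  -- F t = ∫ s in 1..2, M (t * s)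
  have hFeq : ∀ t : ℝ, 0 < t → F t = ∫ s in (1:ℝ)..2, M (t * s) := by
    intro t ht
    rw [intervalIntegral.integral_comp_mul_left M ht.ne']
    simp only [mul_one, smul_eq_mul]
    rw [mul_comm t 2, ← hGdiff t, hF]
    field_simp
  have hFlb : ∀ t : ℝ, 0 < t → M t ≤ F t := by
    intro t ht
    rw [hF, le_div_iff₀ ht]
    have h1 : (∫ _ in t..(2*t), M t) ≤ ∫ u in t..(2*t), M u := by
      apply intervalIntegral.integral_mono_on (by linarith) intervalIntegrable_const (hMint t (2*t))
      intro x hx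
      exact hMmono hx.1
    rw [intervalIntegral.integral_const, smul_eq_mul] at h1
    rw [hGdiff t]
    nlinarith
  have hFub : ∀ t : ℝ, 0 < t → F t ≤ M (2*t) := by
    intro t ht
    rw [hF, div_le_iff₀ ht]
    have h1 : (∫ u in t..(2*t), M u) ≤ ∫ _ in t..(2*t), M (2*t) := by
      apply intervalIntegral.integral_mono_on (by linarith) (hMint t (2*t)) intervalIntegrable_const
      intro x hx
      exact hMmono hx.2
    rw [intervalIntegral.integral_const, smul_eq_mul] at h1
    rw [hGdiff t]
    nlinarith
  have hF0 : F 0 = 0 := by simp [hF]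
  have hFnonneg : ∀ t : ℝ, 0 ≤ t → 0 ≤ F t := by
    intro t ht
    rcases eq_or_lt_of_le ht with h | h
    · rw [← h, hF0]
    · exact le_trans (hM0 t) (hFlb t h)
  have hFmono : MonotoneOn F (Set.Ici 0) := by
    intro t₁ ht₁ t₂ ht₂ h
    rcases eq_or_lt_of_le (Set.mem_Ici.mp ht₁) with h1 | h1
    · rw [← h1, hF0]; exact hFnonneg t₂ ht₂
    · have h2 : (0:ℝ) < t₂ := lt_of_lt_of_le h1 h
      rw [hFeq t₁ h1, hFeq t₂ h2]
      have i1 : Monotone fun s => M (t₁ * s) :=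
        hMmono.comp (fun a b hab => mul_le_mul_of_nonneg_left hab h1.le)
      have i2 : Monotone fun s => M (t₂ * s) :=
        hMmono.comp (fun a b hab => mul_le_mul_of_nonneg_left hab h2.le)
      apply intervalIntegral.integral_mono_on (by norm_num) i1.intervalIntegrable
        i2.intervalIntegrable
      intro s hs
      exact hMmono (mul_le_mul_of_nonneg_right h (le_trans zero_le_one hs.1))
  refine ⟨fun t => t + F t, ⟨?_, ?_, ?_⟩, ?_, ?_⟩
  · -- continuity on Ici 0
    intro t ht
    rcases eq_or_lt_of_le (Set.mem_Ici.mp ht) with h | h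
    · rw [← h]
      refine ContinuousWithinAt.add continuousWithinAt_id ?_
      rw [Metric.continuousWithinAt_iff]
      intro ε hε
      obtain ⟨δ, hδ, hMδ⟩ := hMcont0 (ε/2) (by linarith)
      refine ⟨δ/2, by linarith, ?_⟩
      intro x hx hdist
      have hx0 : 0 ≤ x := hx
      have hxδ : x ≤ δ/2 := by
        rw [Real.dist_eq, abs_of_nonneg (by linarith : (0:ℝ) ≤ x - 0)] at hdist
        linarith
      have hFx : F x ≤ ε/2 := by
        rcases eq_or_lt_of_le hx0 with h0 | h0
        · rw [← h0, hF0]; linarith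
        · exact le_trans (hFub x h0) (hMδ (2*x) (by linarith))
      rw [Real.dist_eq, hF0, sub_zero, abs_of_nonneg (hFnonneg x hx0)]
      linarith
    · refine ContinuousAt.continuousWithinAt ?_
      have hFc : ContinuousAt F t := by
        have hnum : ContinuousAt (fun t => G (2*t) - G t) t :=
          ((hGcont.comp (continuous_const.mul continuous_id)).sub hGcont).continuousAt
        exact hnum.div continuousAt_id (ne_of_gt h)
      exact continuousAt_id.add hFc
  · -- strict mono
    intro a ha b hb hab
    have := hFmono ha hb hab.le
    simp only
    linarith
  · simp [hF0]
  · intro t ht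
    have := hFnonneg t ht
    show t ≤ t + F t
    linarith
  · intro x hx
    rcases eq_or_lt_of_le (hρ x hx) with h | h
    · rw [← h]
      simpa [hF0] using hzero x hx h.ge
    · have h1 := hMle x hx
      have h2 := hFlb _ h
      have h3 := hρ x hx
      show g x ≤ ρ x + F (ρ x)
      linarith

theorem stmt7 {n m p : ℕ}
    (S : Set (EuclideanSpace ℝ (Fin n)))
    (U : Set (EuclideanSpace ℝ (Fin m)))
    (Θ : Set (EuclideanSpace ℝ (Fin p)))
    (hS : IsCompact S) (hU : IsCompact U) (hΘ : IsCompact Θ)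
    (hS0 : (0 : EuclideanSpace ℝ (Fin n)) ∈ S)
    (hU0 : (0 : EuclideanSpace ℝ (Fin m)) ∈ U)
    (hΘ0 : (0 : EuclideanSpace ℝ (Fin p)) ∈ Θ)
    (f : EuclideanSpace ℝ (Fin n) → EuclideanSpace ℝ (Fin m) →
      EuclideanSpace ℝ (Fin p) → EuclideanSpace ℝ (Fin n))
    (hf : Continuous fun q : (EuclideanSpace ℝ (Fin n)) × (EuclideanSpace ℝ (Fin m)) ×
      (EuclideanSpace ℝ (Fin p)) => f q.1 q.2.1 q.2.2)
    (hf0 : ∀ θ, f 0 0 θ = 0) :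
    ∃ γf : ℝ → ℝ → ℝ, ClassK2 γf ∧
      ∀ x ∈ S, ∀ u ∈ U, ∀ θ ∈ Θ,
        ‖f x u θ - f x u 0‖ ≤ γf (Real.sqrt (‖x‖ ^ 2 + ‖u‖ ^ 2)) ‖θ‖ := by
  let En := EuclideanSpace ℝ (Fin n)
  let Em := EuclideanSpace ℝ (Fin m)
  let Ep := EuclideanSpace ℝ (Fin p)
  set T : Set (En × Em × Ep) := S ×ˢ U ×ˢ Θ with hT
  have hTc : IsCompact T := hS.prod (hU.prod hΘ)
  set Ψ : En × Em × Ep → ℝ := fun q => ‖f q.1 q.2.1 q.2.2 - f q.1 q.2.1 0‖ with hΨ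
  have hΨc : Continuous Ψ := by
    apply Continuous.norm
    have h2 : Continuous fun q : En × Em × Ep => f q.1 q.2.1 0 :=
      hf.comp (continuous_fst.prodMk
        ((continuous_fst.comp continuous_snd).prodMk continuous_const))
    exact hf.sub h2
  -- global bound
  obtain ⟨q₀, hq₀T, hq₀'⟩ := hTc.exists_isMaxOn ⟨(0,0,0), ⟨hS0, hU0, hΘ0⟩⟩ hΨc.continuousOn
  have hq₀ : ∀ q ∈ T, Ψ q ≤ Ψ q₀ := hq₀'
  set C := Ψ q₀ with hC
  -- uniform continuity
  have hUC := Metric.uniformContinuousOn_iff.mp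
    (hTc.uniformContinuousOn_of_continuous hΨc.continuousOn)
  -- g₁ : function of θ
  set g₁ : Ep → ℝ := fun θ =>
    sSup ((fun q : En × Em => ‖f q.1 q.2 θ - f q.1 q.2 0‖) '' (S ×ˢ U)) with hg₁
  set g₂ : En × Em → ℝ := fun q =>
    sSup ((fun θ : Ep => ‖f q.1 q.2 θ - f q.1 q.2 0‖) '' Θ) with hg₂
  have hne₁ : ∀ θ : Ep, ((fun q : En × Em => ‖f q.1 q.2 θ - f q.1 q.2 0‖) '' (S ×ˢ U)).Nonempty :=
    fun θ => ⟨_, ⟨(0,0), ⟨hS0, hU0⟩, rfl⟩⟩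
  have hne₂ : ∀ q : En × Em, ((fun θ : Ep => ‖f q.1 q.2 θ - f q.1 q.2 0‖) '' Θ).Nonempty :=
    fun q => ⟨_, ⟨0, hΘ0, rfl⟩⟩
  have hub₁ : ∀ θ ∈ Θ, ∀ y ∈ (fun q : En × Em => ‖f q.1 q.2 θ - f q.1 q.2 0‖) '' (S ×ˢ U), y ≤ C := by
    rintro θ hθ y ⟨⟨x, u⟩, hxu, rfl⟩
    exact hq₀ (x, u, θ) ⟨hxu.1, hxu.2, hθ⟩
  have hub₂ : ∀ q ∈ S ×ˢ U, ∀ y ∈ (fun θ : Ep => ‖f q.1 q.2 θ - f q.1 q.2 0‖) '' Θ, y ≤ C := by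
    rintro ⟨x, u⟩ hxu y ⟨θ, hθ, rfl⟩
    exact hq₀ (x, u, θ) ⟨hxu.1, hxu.2, hθ⟩
  -- apply majorant lemma to g₁
  obtain ⟨α, hαK, hαge, hα⟩ := classK_majorant Θ g₁ (fun θ => ‖θ‖) C
    (fun θ hθ => csSup_le (hne₁ θ) (hub₁ θ hθ))
    (fun θ _ => norm_nonneg θ)
    (by
      intro θ hθ hθ0
      have : θ = 0 := norm_le_zero_iff.mp hθ0
      subst this
      refine csSup_le (hne₁ 0) ?_
      rintro y ⟨⟨x, u⟩, _, rfl⟩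
      simp)
    (by
      intro ε hε
      obtain ⟨δ, hδ, h⟩ := hUC ε hε
      refine ⟨δ/2, by linarith, ?_⟩
      intro θ hθ hθδ
      refine csSup_le (hne₁ θ) ?_
      rintro y ⟨⟨x, u⟩, hxu, rfl⟩
      have h1 : ((x, u, θ) : En × Em × Ep) ∈ T := ⟨hxu.1, hxu.2, hθ⟩
      have h2 : ((x, u, 0) : En × Em × Ep) ∈ T := ⟨hxu.1, hxu.2, hΘ0⟩
      have hd : dist ((x, u, θ) : En × Em × Ep) (x, u, 0) < δ := by
        rw [Prod.dist_eq, Prod.dist_eq]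
        simp only [dist_self]
        rw [dist_zero_right]
        have : max 0 (max 0 ‖θ‖) = ‖θ‖ := by
          rw [max_eq_right (norm_nonneg θ), max_eq_right (norm_nonneg θ)]
        rw [this]; linarith
      have := h _ h1 _ h2 hd
      have hΨ0 : Ψ (x, u, 0) = 0 := by simp [hΨ]
      rw [Real.dist_eq, hΨ0, sub_zero] at this
      have : Ψ (x, u, θ) < ε := lt_of_abs_lt this
      exact le_of_lt this)
  -- apply majorant lemma to g₂
  obtain ⟨β, hβK, hβge, hβ⟩ := classK_majorant (S ×ˢ U) g₂
    (fun q => Real.sqrt (‖q.1‖^2 + ‖q.2‖^2)) C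
    (fun q hq => csSup_le (hne₂ q) (hub₂ q hq))
    (fun q _ => Real.sqrt_nonneg _)
    (by
      rintro ⟨x, u⟩ _ h0
      have hsum : ‖x‖^2 + ‖u‖^2 ≤ 0 := by
        by_contra hpos
        push_neg at hpos
        have := Real.sqrt_pos.mpr hpos
        linarith
      have hx : ‖x‖ = 0 := by nlinarith [norm_nonneg x, norm_nonneg u, sq_nonneg ‖x‖, sq_nonneg ‖u‖]
      have hu : ‖u‖ = 0 := by nlinarith [norm_nonneg x, norm_nonneg u]
      have hx0 : x = 0 := norm_eq_zero.mp hx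
      have hu0 : u = 0 := norm_eq_zero.mp hu
      subst hx0; subst hu0
      refine csSup_le (hne₂ (0, 0)) ?_
      rintro y ⟨θ, _, rfl⟩
      simp [hf0])
    (by
      intro ε hε
      obtain ⟨δ, hδ, h⟩ := hUC ε hε
      refine ⟨δ/2, by linarith, ?_⟩
      rintro ⟨x, u⟩ hxu hρδ
      refine csSup_le (hne₂ (x, u)) ?_
      rintro y ⟨θ, hθ, rfl⟩
      have h1 : ((x, u, θ) : En × Em × Ep) ∈ T := ⟨hxu.1, hxu.2, hθ⟩
      have h2 : ((0, 0, θ) : En × Em × Ep) ∈ T := ⟨hS0, hU0, hθ⟩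
      have hxle : ‖x‖ ≤ Real.sqrt (‖x‖^2 + ‖u‖^2) := by
        have := Real.sqrt_le_sqrt (show ‖x‖^2 ≤ ‖x‖^2 + ‖u‖^2 by nlinarith [sq_nonneg ‖u‖])
        rwa [Real.sqrt_sq (norm_nonneg x)] at this
      have hule : ‖u‖ ≤ Real.sqrt (‖x‖^2 + ‖u‖^2) := by
        have := Real.sqrt_le_sqrt (show ‖u‖^2 ≤ ‖x‖^2 + ‖u‖^2 by nlinarith [sq_nonneg ‖x‖])
        rwa [Real.sqrt_sq (norm_nonneg u)] at this
      have hd : dist ((x, u, θ) : En × Em × Ep) (0, 0, θ) < δ := by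
        rw [Prod.dist_eq, Prod.dist_eq]
        simp only [dist_self, dist_zero_right]
        have hm : max ‖x‖ (max ‖u‖ 0) ≤ δ/2 := by
          apply max_le (by linarith [hxle]) (max_le (by linarith [hule]) (by linarith))
        calc max ‖x‖ (max ‖u‖ 0) ≤ δ/2 := hm
          _ < δ := by linarith
      have := h _ h1 _ h2 hd
      have hΨ0 : Ψ (0, 0, θ) = 0 := by simp [hΨ, hf0]
      rw [Real.dist_eq, hΨ0, sub_zero] at this
      exact le_of_lt (lt_of_abs_lt this))
  -- positivity facts
  have hαnn : ∀ t ≥ (0:ℝ), 0 ≤ α t := fun t ht => le_trans ht (hαge t ht)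
  have hβnn : ∀ s ≥ (0:ℝ), 0 ≤ β s := fun s hs => le_trans hs (hβge s hs)
  have hαpos : ∀ t > (0:ℝ), 0 < α t := fun t ht => lt_of_lt_of_le ht (hαge t ht.le)
  have hβpos : ∀ s > (0:ℝ), 0 < β s := fun s hs => lt_of_lt_of_le hs (hβge s hs.le)
  refine ⟨fun s t => Real.sqrt (β s * α t), ⟨?_, ?_, ?_⟩, ?_⟩
  · -- joint continuity
    apply Real.continuous_sqrt.comp_continuousOn
    exact (hβK.1.comp continuous_fst.continuousOn (fun q hq => hq.1)).mul
      (hαK.1.comp continuous_snd.continuousOn (fun q hq => hq.2))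
  · -- ClassK in second var for fixed s > 0
    intro s hs
    refine ⟨?_, ?_, ?_⟩
    · exact Real.continuous_sqrt.comp_continuousOn (continuousOn_const.mul hαK.1)
    · intro a ha b hb hab
      apply Real.sqrt_lt_sqrt (mul_nonneg (hβpos s hs).le (hαnn a ha))
      exact mul_lt_mul_of_pos_left (hαK.2.1 ha hb hab) (hβpos s hs)
    · show Real.sqrt (β s * α 0) = 0
      rw [hαK.2.2, mul_zero, Real.sqrt_zero]
  · -- ClassK in first var for fixed t > 0
    intro s hs
    refine ⟨?_, ?_, ?_⟩
    · exact Real.continuous_sqrt.comp_continuousOn (hβK.1.mul continuousOn_const)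
    · intro a ha b hb hab
      apply Real.sqrt_lt_sqrt (mul_nonneg (hβnn a ha) (hαpos s hs).le)
      exact mul_lt_mul_of_pos_right (hβK.2.1 ha hb hab) (hαpos s hs)
    · show Real.sqrt (β 0 * α s) = 0
      rw [hβK.2.2, zero_mul, Real.sqrt_zero]
  · -- the bound
    intro x hx u hu θ hθ
    set d := ‖f x u θ - f x u 0‖ with hd
    have hd1 : d ≤ α ‖θ‖ := by
      refine le_trans ?_ (hα θ hθ)
      exact le_csSup ⟨C, fun y hy => hub₁ θ hθ y hy⟩ ⟨(x, u), ⟨hx, hu⟩, rfl⟩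
    have hd2 : d ≤ β (Real.sqrt (‖x‖^2 + ‖u‖^2)) := by
      refine le_trans ?_ (hβ (x, u) ⟨hx, hu⟩)
      exact le_csSup ⟨C, fun y hy => hub₂ (x, u) ⟨hx, hu⟩ y hy⟩ ⟨θ, hθ, rfl⟩
    have hdnn : 0 ≤ d := norm_nonneg _
    have hβnn' : 0 ≤ β (Real.sqrt (‖x‖^2 + ‖u‖^2)) := hβnn _ (Real.sqrt_nonneg _)
    calc d = Real.sqrt (d * d) := by rw [Real.sqrt_mul_self hdnn]
      _ ≤ Real.sqrt (β (Real.sqrt (‖x‖^2 + ‖u‖^2)) * α ‖θ‖) :=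
        Real.sqrt_le_sqrt (mul_le_mul hd2 hd1 hdnn hβnn')
end

section
/- Consider the scalar system x⁺ = σ(x + (1+θ)u) where σ(y) = sgn(y)√|y|, with control law κ₁(x) = −sat(x). For every θ with 0 < |θ| ≤ 1 and every x with 0 < |x| < |θ|, the Lyapunov function V(x) = 2x² strictly increases along the closed loop: V(σ(θx)) − V(x) = 2(|θ| − |x|)|x| > 0. Hence the origin is not asymptotically stable for the perturbed closed loop for any nonzero θ. -/
/-- Signed square root: `σ(y) = sgn(y)·√|y|`. -/
noncomputable def signedSqrt (y : ℝ) : ℝ := Real.sign y * Real.sqrt |y|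

/-- Lyapunov function `V(x) = 2x²` of the MPC for `x⁺ = σ(x + (1+θ)u)`. -/
noncomputable def Vsq (x : ℝ) : ℝ := 2 * x ^ 2

theorem stmt15 (θ x : ℝ) (hθ0 : 0 < |θ|) (hθ1 : |θ| ≤ 1)
    (hx0 : 0 < |x|) (hxθ : |x| < |θ|) :
    Vsq (signedSqrt (θ * x)) - Vsq x = 2 * (|θ| - |x|) * |x| ∧
    0 < Vsq (signedSqrt (θ * x)) - Vsq x := by
  have hθx : θ * x ≠ 0 := mul_ne_zero (abs_pos.mp hθ0) (abs_pos.mp hx0)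
  have hs : (Real.sign (θ * x)) ^ 2 = 1 := by
    rcases Real.sign_apply_eq_of_ne_zero _ hθx with h | h <;> rw [h] <;> norm_num
  have hsq : (Real.sqrt |θ * x|) ^ 2 = |θ * x| := Real.sq_sqrt (abs_nonneg _)
  have key : Vsq (signedSqrt (θ * x)) - Vsq x = 2 * (|θ| - |x|) * |x| := by
    simp only [Vsq, signedSqrt, mul_pow, hs, hsq, one_mul]
    rw [abs_mul, ← sq_abs x]; ring
  exact ⟨key, by rw [key]; have h := sub_pos.mpr hxθ; positivity⟩
end

section
/- For the system x⁺ = σ(x + (1+θ)u) with σ(y) = sgn(y)√|y| and control law κ₁(x) = −sat(x), the interval [−2,2] is robustly positive invariant for all |θ| ≤ 3: if |x| ≤ 2 and |θ| ≤ 3 then |σ(x − sat(x) − θ·sat(x))| ≤ 2. -/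
/-- Saturation to `[-1,1]`. -/
noncomputable def sat (y : ℝ) : ℝ := max (-1) (min 1 y)

theorem stmt16 (x θ : ℝ) (hx : |x| ≤ 2) (hθ : |θ| ≤ 3) :
    |signedSqrt (x - sat x - θ * sat x)| ≤ 2 := by
  have h1 : |x - sat x| ≤ 1 := by
    rw [abs_le] at hx ⊢
    unfold sat
    rcases le_total x (-1) with h | h
    · rw [max_eq_left (by simp [min_le_iff]; right; exact h)]; constructor <;> linarith
    · rcases le_total x 1 with h2 | h2
      · rw [min_eq_right h2, max_eq_right h]; norm_num
      · rw [min_eq_left h2, max_eq_right (by linarith)]; constructor <;> linarith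
  have h2 : |sat x| ≤ 1 := by
    unfold sat
    rw [abs_le]
    constructor
    · exact le_max_left _ _
    · exact max_le (by norm_num) (min_le_left _ _)
  have hy : |x - sat x - θ * sat x| ≤ 4 := by
    calc |x - sat x - θ * sat x| ≤ |x - sat x| + |θ * sat x| := abs_sub _ _
    _ ≤ 4 := by
        have : |θ * sat x| ≤ 3 * 1 := by
          rw [abs_mul]; exact mul_le_mul hθ h2 (abs_nonneg _) (by norm_num)
        linarith
  have h4 : Real.sqrt 4 = 2 := by
    rw [show (4:ℝ) = 2^2 by norm_num, Real.sqrt_sq (by norm_num)]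
  set y := x - sat x - θ * sat x with hydef
  have hs : |Real.sign y| ≤ 1 := by
    rcases Real.sign_apply_eq y with h | h | h <;> simp [h]
  have hq : Real.sqrt |y| ≤ 2 := by
    rw [← h4]; exact Real.sqrt_le_sqrt hy
  unfold signedSqrt
  rw [abs_mul, abs_of_nonneg (Real.sqrt_nonneg _)]
  calc |Real.sign y| * Real.sqrt |y| ≤ 1 * 2 :=
        mul_le_mul hs hq (Real.sqrt_nonneg _) (by norm_num)
    _ = 2 := one_mul 2
end
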